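/- Let κ be a positive integer, let G = (V,E) be a finite simple graph in which every odd cycle has length at least 2κ+1, let b : V → ℤ_{>0}, and let μ be a maximum b-matching in G. If (u,v) ∈ E and alt(u) is even with alt(u) ≤ κ−1, then alt(v) is finite and odd. -/

import Mathlib

/-!
Let `p` be a shortest alternating path to `u`, of even length `n`. Extending `p` by the edge
`uv` (or cutting it at `v`) gives `alt(v) ≤ n + 1`, so if `alt(v)` is not odd it is an even
`m ≤ n`. Gluing `p`, the edge `uv` and a shortest alternating path to `v` traversed backwards
gives a walk of odd length `n + m + 1 ≤ 2κ - 1` between two available vertices whose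
even-numbered edges all have positive multiplicity. Cutting out closed subwalks of even length
preserves this and eventually yields an augmenting path, contradicting the maximality of `μ`;
the only obstruction is a closed subwalk of odd length, which contains an odd cycle of length
at most `2κ - 1`.
-/

open SimpleGraph Finset

variable {V : Type*} [Fintype V] [DecidableEq V]

/-- `μ` is a `b`-matching in `G`: a multiplicity function supported on the edges of `G`
such that the total multiplicity of the edges incident to any vertex `v` is at most
`b v`. -/
def IsBMatching (G : SimpleGraph V) [DecidableRel G.Adj] (b : V → ℕ) (μ : Sym2 V → ℕ) :
    Prop :=
  (∀ e : Sym2 V, μ e ≠ 0 → e ∈ G.edgeSet) ∧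
    ∀ v : V, ∑ e ∈ G.edgeFinset.filter (fun e => v ∈ e), μ e ≤ b v

/-- The value of a `b`-matching: the total multiplicity of all edges. -/
def bValue (G : SimpleGraph V) [DecidableRel G.Adj] (μ : Sym2 V → ℕ) : ℕ :=
  ∑ e ∈ G.edgeFinset, μ e

/-- A vertex is available w.r.t. `μ` if the total multiplicity of its incident edges is
not equal to `b v` (i.e. it is not matched). -/
def Available (G : SimpleGraph V) [DecidableRel G.Adj] (b : V → ℕ) (μ : Sym2 V → ℕ)
    (v : V) : Prop :=
  ∑ e ∈ G.edgeFinset.filter (fun e => v ∈ e), μ e ≠ b v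

/-- `p` is an alternating path w.r.t. the `b`-matching `μ`: a simple path starting at an
available vertex such that every even-indexed edge (`e_2, e_4, …`, i.e. odd position in
the 0-indexed edge list) has positive multiplicity. -/
def IsAlternating (G : SimpleGraph V) [DecidableRel G.Adj] (b : V → ℕ) (μ : Sym2 V → ℕ)
    {u v : V} (p : G.Walk u v) : Prop :=
  p.IsPath ∧ Available G b μ u ∧
    ∀ i : ℕ, ∀ h : i < p.edges.length, Odd i → 0 < μ (p.edges[i]'h)

/-- `alt(v)`: the length of a shortest alternating path ending at `v` (`∞` if none). -/
noncomputable def altDist (G : SimpleGraph V) [DecidableRel G.Adj] (b : V → ℕ)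
    (μ : Sym2 V → ℕ) (v : V) : ℕ∞ :=
  ⨅ (u : V) (p : G.Walk u v) (_ : IsAlternating G b μ p), (p.length : ℕ∞)

namespace List

variable {α : Type*}

/-- `P` holds at every position `i` of `l` with `k + i` odd: `k` is the offset of `l` inside a
longer list whose odd positions are constrained. -/
def ForallOddIndex (P : α → Prop) (k : ℕ) (l : List α) : Prop :=
  ∀ i (h : i < l.length), Odd (k + i) → P l[i]

variable {P : α → Prop} {k k' : ℕ} {a : α} {l l₁ l₂ : List α}

lemma forallOddIndex_zero :
    ForallOddIndex P 0 l ↔ ∀ i (h : i < l.length), Odd i → P l[i] := by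
  simp only [ForallOddIndex, zero_add]

lemma ForallOddIndex.of_modEq (h : k ≡ k' [MOD 2]) (hl : ForallOddIndex P k l) :
    ForallOddIndex P k' l := fun i hi hodd =>
  hl i hi (by rw [Nat.odd_iff] at hodd ⊢; rw [Nat.ModEq] at h; omega)

lemma forallOddIndex_append :
    ForallOddIndex P k (l₁ ++ l₂) ↔
      ForallOddIndex P k l₁ ∧ ForallOddIndex P (k + l₁.length) l₂ := by
  refine ⟨fun h => ⟨fun i hi hodd => ?_, fun i hi hodd => ?_⟩,
    fun ⟨h₁, h₂⟩ i hi hodd => ?_⟩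
  · have := h i (by simp; omega) hodd
    rwa [getElem_append_left hi] at this
  · have := h (l₁.length + i) (by simp; omega) (by rwa [← add_assoc])
    simpa only [getElem_append_right (Nat.le_add_right _ i), Nat.add_sub_cancel_left]
      using this
  · rcases lt_or_ge i l₁.length with hlt | hge
    · rw [getElem_append_left hlt]
      exact h₁ i hlt hodd
    · rw [getElem_append_right hge]
      exact h₂ _ (by simp at hi; omega) (by rwa [add_assoc, Nat.add_sub_cancel' hge])

lemma forallOddIndex_cons :
    ForallOddIndex P k (a :: l) ↔ (Odd k → P a) ∧ ForallOddIndex P (k + 1) l := by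
  rw [← singleton_append, forallOddIndex_append]
  simp [ForallOddIndex]

lemma forallOddIndex_reverse :
    ForallOddIndex P k l.reverse ↔ ForallOddIndex P (k + l.length + 1) l := by
  have parity : ∀ i < l.length, Odd (k + (l.length - 1 - i)) ↔ Odd (k + l.length + 1 + i) := by
    intro i hi
    simp only [Nat.odd_iff]
    omega
  refine ⟨fun h i hi hodd => ?_, fun h i hi hodd => ?_⟩
  · have := h (l.length - 1 - i) (by simp; omega) ((parity i hi).2 hodd)
    rw [getElem_reverse] at this
    convert this using 2
    omega
  · rw [List.length_reverse] at hi
    rw [getElem_reverse]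
    apply h _ (by omega)
    rw [← parity _ (by omega), show l.length - 1 - (l.length - 1 - i) = i by omega]
    exact hodd

end List

namespace SimpleGraph.Walk

variable {G : SimpleGraph V}

omit [Fintype V] in
theorem exists_isPath_or_odd_isCycle (P : Sym2 V → Prop) {a c : V} (W : G.Walk a c) (k : ℕ)
    (hW : List.ForallOddIndex P k W.edges) :
    (∃ p : G.Walk a c, p.IsPath ∧ p.length ≤ W.length ∧ p.length ≡ W.length [MOD 2] ∧
        List.ForallOddIndex P k p.edges) ∨
      ∃ (y : V) (C : G.Walk y y), C.IsCycle ∧ Odd C.length ∧ C.length ≤ W.length := by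
  induction W generalizing k with
  | nil => exact Or.inl ⟨.nil, .nil, le_rfl, rfl, hW⟩
  | @cons a x c hax W ih =>
    rw [edges_cons, List.forallOddIndex_cons] at hW
    obtain ⟨p, hp, hlen, hpar, hpW⟩ | ⟨y, C, hC, hodd, hlen⟩ := ih (k + 1) hW.2
    swap
    · exact Or.inr ⟨y, C, hC, hodd, by rw [length_cons]; omega⟩
    simp only [Nat.ModEq, length_cons] at hpar ⊢
    by_cases ha : a ∈ p.support
    swap
    · refine Or.inl ⟨.cons hax p, hp.cons ha, by rw [length_cons]; omega,
        by rw [length_cons]; omega, ?_⟩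
      rw [edges_cons, List.forallOddIndex_cons]
      exact ⟨hW.1, hpW⟩
    have hlen_split : (p.takeUntil a ha).length + (p.dropUntil a ha).length = p.length := by
      rw [← length_append, p.take_spec ha]
    rw [← p.take_spec ha, edges_append, List.forallOddIndex_append] at hpW
    rcases Nat.even_or_odd (p.takeUntil a ha).length with heven | hodd
    · -- `a → x ⇝ a` is a cycle: the path `x ⇝ a` has even length, so it is not the edge `xa`
      refine Or.inr ⟨a, .cons hax (p.takeUntil a ha), ?_, ?_, ?_⟩
      · refine (cons_isCycle_iff _ hax).2 ⟨hp.takeUntil ha, fun hmem => ?_⟩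
        have := (hp.takeUntil ha).length_eq_one_of_mem_edges (Sym2.eq_swap ▸ hmem)
        exact Nat.not_even_one (this ▸ heven)
      · exact (length_cons _ _).symm ▸ heven.add_one
      · rw [length_cons]; omega
    · refine Or.inl ⟨p.dropUntil a ha, hp.dropUntil ha, by omega, ?_, hpW.2.of_modEq ?_⟩ <;>
        rw [Nat.odd_iff] at hodd
      · omega
      · simp only [Nat.ModEq, length_edges]; omega

/-- The `i`-th edge of the walk contributes `(-1) ^ i`. -/
def altIndicator : {a c : V} → G.Walk a c → Sym2 V → ℤ
  | _, _, .nil, _ => 0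
  | a, _, .cons (v := x) _ p, e => (if e = s(a, x) then 1 else 0) - altIndicator p e

omit [Fintype V] in
lemma altIndicator_eq_zero {a c : V} (p : G.Walk a c) {e : Sym2 V} (he : e ∉ p.edges) :
    altIndicator p e = 0 := by
  induction p with
  | nil => rfl
  | cons h q ih =>
    rw [edges_cons, List.mem_cons, not_or] at he
    rw [altIndicator, ih he.2, if_neg he.1, sub_zero]

omit [Fintype V] in
lemma altIndicator_edges_getElem {a c : V} (p : G.Walk a c) (hp : p.edges.Nodup) (i : ℕ)
    (hi : i < p.edges.length) : altIndicator p p.edges[i] = (-1) ^ i := by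
  induction p generalizing i with
  | nil => simp at hi
  | @cons a x c hax q ih =>
    rw [edges_cons, List.nodup_cons] at hp
    cases i with
    | zero => simp [altIndicator, altIndicator_eq_zero q hp.1]
    | succ i =>
      have hi' : i < q.edges.length := by simpa using hi
      have hne : q.edges[i] ≠ s(a, x) := fun h => hp.1 (h ▸ List.getElem_mem hi')
      simp only [edges_cons, List.getElem_cons_succ, altIndicator, ih hp.2 i hi', hne,
        if_false, pow_succ]
      ring

omit [Fintype V] in
lemma sum_altIndicator_cons (s : Finset (Sym2 V)) {a x c : V} (hax : G.Adj a x)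
    (p : G.Walk x c) :
    ∑ e ∈ s, altIndicator (.cons hax p) e =
      (if s(a, x) ∈ s then 1 else 0) - ∑ e ∈ s, altIndicator p e := by
  simp only [altIndicator, Finset.sum_sub_distrib, Finset.sum_ite_eq']

variable [DecidableRel G.Adj]

lemma sum_altIndicator_incident {a c : V} (p : G.Walk a c) (w : V) :
    ∑ e ∈ G.edgeFinset.filter (w ∈ ·), altIndicator p e =
      (if w = a then 1 else 0) - (-1) ^ p.length * (if w = c then 1 else 0) := by
  induction p with
  | nil => simp [altIndicator]
  | @cons a x c hax q ih =>
    have hmem : (if s(a, x) ∈ G.edgeFinset.filter (w ∈ ·) then (1 : ℤ) else 0) =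
        (if w = a then 1 else 0) + (if w = x then 1 else 0) := by
      by_cases hwa : w = a <;> by_cases hwx : w = x <;> simp [hax, hwa, hwx, hax.ne, hax.ne.symm]
    rw [sum_altIndicator_cons, ih, length_cons, pow_succ, hmem]
    ring

lemma sum_altIndicator {a c : V} (p : G.Walk a c) :
    ∑ e ∈ G.edgeFinset, altIndicator p e = if Even p.length then 0 else 1 := by
  induction p with
  | nil => simp [altIndicator]
  | @cons a x c hax q ih =>
    rw [sum_altIndicator_cons, ih, if_pos (G.mem_edgeFinset.2 hax), length_cons]
    by_cases heven : Even q.length <;> simp [heven, Nat.even_add_one]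

end SimpleGraph.Walk

section BMatching

variable {G : SimpleGraph V} [DecidableRel G.Adj] {b : V → ℕ} {μ : Sym2 V → ℕ}

def augment (μ : Sym2 V → ℕ) {a c : V} (p : G.Walk a c) (e : Sym2 V) : ℕ :=
  (μ e + p.altIndicator e).toNat

variable {a c : V} {p : G.Walk a c}

omit [Fintype V] [DecidableRel G.Adj] in
lemma natCast_augment (hp : p.edges.Nodup) (hμp : List.ForallOddIndex (0 < μ ·) 0 p.edges)
    (e : Sym2 V) : (augment μ p e : ℤ) = μ e + p.altIndicator e := by
  refine Int.toNat_of_nonneg ?_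
  by_cases he : e ∈ p.edges
  · obtain ⟨i, hi, rfl⟩ := List.getElem_of_mem he
    rw [p.altIndicator_edges_getElem hp i hi]
    rcases Nat.even_or_odd i with heven | hodd
    · rw [heven.neg_one_pow]; positivity
    · have := List.forallOddIndex_zero.1 hμp i hi hodd
      rw [hodd.neg_one_pow]; omega
  · rw [p.altIndicator_eq_zero he]; positivity

lemma isBMatching_augment (hμ : IsBMatching G b μ) (hp : p.IsPath) (hodd : Odd p.length)
    (ha : Available G b μ a) (hc : Available G b μ c)
    (hμp : List.ForallOddIndex (0 < μ ·) 0 p.edges) : IsBMatching G b (augment μ p) := by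
  have hac : a ≠ c := by
    rintro rfl
    rw [Walk.length_eq_zero_iff.2 (Walk.isPath_iff_nil.1 hp)] at hodd
    exact Nat.not_odd_zero hodd
  have hcast := natCast_augment hp.edges_nodup hμp
  refine ⟨fun e he => ?_, fun w => ?_⟩
  · by_cases hep : e ∈ p.edges
    · exact p.edges_subset_edgeSet hep
    · refine hμ.1 e fun h0 => he ?_
      have := hcast e
      rw [h0, p.altIndicator_eq_zero hep] at this
      exact_mod_cast this
  · have hsum : ((∑ e ∈ G.edgeFinset.filter (w ∈ ·), augment μ p e : ℕ) : ℤ) =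
        (∑ e ∈ G.edgeFinset.filter (w ∈ ·), μ e : ℕ) +
          ((if w = a then 1 else 0) + (if w = c then 1 else 0)) := by
      push_cast
      simp only [hcast, Finset.sum_add_distrib, Walk.sum_altIndicator_incident]
      rw [hodd.neg_one_pow]
      ring
    have hle := hμ.2 w
    unfold Available at ha hc
    by_cases hwa : w = a
    · subst hwa; simp only [if_neg hac] at hsum; omega
    · by_cases hwc : w = c
      · subst hwc; simp only [if_neg hwa] at hsum; omega
      · simp only [if_neg hwa, if_neg hwc] at hsum; omega

lemma sum_augment (hp : p.edges.Nodup) (hodd : Odd p.length)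
    (hμp : List.ForallOddIndex (0 < μ ·) 0 p.edges) :
    ∑ e ∈ G.edgeFinset, augment μ p e = ∑ e ∈ G.edgeFinset, μ e + 1 := by
  have : ((∑ e ∈ G.edgeFinset, augment μ p e : ℕ) : ℤ) =
      (∑ e ∈ G.edgeFinset, μ e : ℕ) + 1 := by
    push_cast
    rw [Finset.sum_congr rfl fun e _ => natCast_augment hp hμp e, Finset.sum_add_distrib,
      Walk.sum_altIndicator, if_neg (Nat.not_even_iff_odd.2 hodd)]
  exact_mod_cast this

theorem exists_odd_isCycle_of_alternating_walk (hμ : IsBMatching G b μ)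
    (hmax : ∀ μ' : Sym2 V → ℕ, IsBMatching G b μ' →
      ∑ e ∈ G.edgeFinset, μ' e ≤ ∑ e ∈ G.edgeFinset, μ e)
    (W : G.Walk a c) (hodd : Odd W.length) (ha : Available G b μ a) (hc : Available G b μ c)
    (hW : List.ForallOddIndex (0 < μ ·) 0 W.edges) :
    ∃ (y : V) (C : G.Walk y y), C.IsCycle ∧ Odd C.length ∧ C.length ≤ W.length := by
  obtain ⟨p, hp, -, hpar, hpμ⟩ | hC := W.exists_isPath_or_odd_isCycle (0 < μ ·) 0 hW
  · have hpodd : Odd p.length := by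
      rw [Nat.odd_iff] at hodd ⊢
      rw [Nat.ModEq] at hpar
      omega
    have := hmax _ (isBMatching_augment hμ hp hpodd ha hc hpμ)
    rw [sum_augment hp.edges_nodup hpodd hpμ] at this
    omega
  · exact hC

variable {u v : V}

lemma IsAlternating.forallOddIndex {p : G.Walk a v} (hp : IsAlternating G b μ p) :
    List.ForallOddIndex (0 < μ ·) 0 p.edges :=
  List.forallOddIndex_zero.2 hp.2.2

lemma IsAlternating.takeUntil {p : G.Walk a u} (hp : IsAlternating G b μ p)
    (hv : v ∈ p.support) : IsAlternating G b μ (p.takeUntil v hv) := by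
  refine ⟨hp.1.takeUntil hv, hp.2.1, (List.forallOddIndex_zero (P := (0 < μ ·))).1 ?_⟩
  have := hp.forallOddIndex
  rw [← p.take_spec hv, Walk.edges_append, List.forallOddIndex_append] at this
  exact this.1

lemma IsAlternating.concat {p : G.Walk a u} (hp : IsAlternating G b μ p)
    (heven : Even p.length) (huv : G.Adj u v) (hv : v ∉ p.support) :
    IsAlternating G b μ (p.concat huv) := by
  refine ⟨hp.1.concat hv huv, hp.2.1, (List.forallOddIndex_zero (P := (0 < μ ·))).1 ?_⟩
  rw [Walk.edges_concat, List.concat_eq_append, List.forallOddIndex_append,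
    List.forallOddIndex_cons, zero_add, Walk.length_edges]
  exact ⟨hp.forallOddIndex, fun hodd => absurd heven (Nat.not_even_iff_odd.2 hodd),
    fun _ h => absurd h (by simp)⟩

lemma altDist_le_length {p : G.Walk a v} (hp : IsAlternating G b μ p) :
    altDist G b μ v ≤ p.length :=
  iInf₂_le_of_le a p (iInf_le _ hp)

lemma exists_isAlternating_length_eq {n : ℕ} (h : altDist G b μ v = n) :
    ∃ (a : V) (p : G.Walk a v), IsAlternating G b μ p ∧ p.length = n := by
  have hlt : altDist G b μ v < (n + 1 : ℕ) := by rw [h]; exact_mod_cast n.lt_succ_self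
  simp only [altDist, iInf_lt_iff] at hlt
  obtain ⟨a, p, hp, hlen⟩ := hlt
  have hge := h ▸ altDist_le_length hp
  exact ⟨a, p, hp,
    le_antisymm (Order.lt_add_one_iff.1 (Nat.cast_lt.1 hlen)) (Nat.cast_le.1 hge)⟩

lemma altDist_le_length_add_one {p : G.Walk a u} (hp : IsAlternating G b μ p)
    (heven : Even p.length) (huv : G.Adj u v) : altDist G b μ v ≤ (p.length + 1 : ℕ) := by
  by_cases hv : v ∈ p.support
  · calc altDist G b μ v ≤ (p.takeUntil v hv).length := altDist_le_length (hp.takeUntil hv)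
      _ ≤ (p.length + 1 : ℕ) := by
        exact_mod_cast (p.length_takeUntil_le_length hv).trans p.length.le_succ
  · simpa using altDist_le_length (hp.concat heven huv hv)

lemma IsAlternating.forallOddIndex_append_cons_reverse {c : V} {p : G.Walk a u}
    {q : G.Walk c v} (hp : IsAlternating G b μ p) (hq : IsAlternating G b μ q)
    (hp_even : Even p.length) (hq_even : Even q.length) (huv : G.Adj u v) :
    List.ForallOddIndex (0 < μ ·) 0 (p.append (.cons huv q.reverse)).edges := by
  rw [Walk.edges_append, Walk.edges_cons, Walk.edges_reverse, List.forallOddIndex_append,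
    List.forallOddIndex_cons, List.forallOddIndex_reverse, zero_add, Walk.length_edges,
    Walk.length_edges]
  refine ⟨hp.forallOddIndex, fun hodd => absurd hp_even (Nat.not_even_iff_odd.2 hodd),
    hq.forallOddIndex.of_modEq ?_⟩
  rw [Nat.even_iff] at hp_even hq_even
  simp only [Nat.ModEq]
  omega

end BMatching

theorem stmt11_general (κ : ℕ) (G : SimpleGraph V) [DecidableRel G.Adj]
    (hgirth : ∀ (w : V) (c : G.Walk w w), c.IsCycle → Odd c.length → 2 * κ + 1 ≤ c.length)
    (b : V → ℕ)
    (μ : Sym2 V → ℕ) (hμ : IsBMatching G b μ)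
    (hmax : ∀ μ' : Sym2 V → ℕ, IsBMatching G b μ' →
      ∑ e ∈ G.edgeFinset, μ' e ≤ ∑ e ∈ G.edgeFinset, μ e)
    (u v : V) (huv : G.Adj u v)
    (n : ℕ) (hu : altDist G b μ u = n) (heven : Even n) (hle : n ≤ κ - 1) :
    ∃ m : ℕ, altDist G b μ v = m ∧ Odd m := by
  obtain ⟨a, p, hp, rfl⟩ := exists_isAlternating_length_eq hu
  obtain ⟨m, hm, hm_le⟩ := ENat.le_natCast_iff.1 (altDist_le_length_add_one hp heven huv)
  refine ⟨m, hm, Nat.not_even_iff_odd.1 fun hm_even => ?_⟩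
  obtain ⟨c, q, hq, rfl⟩ := exists_isAlternating_length_eq hm
  have hlen : Odd (p.append (.cons huv q.reverse)).length := by
    rw [Walk.length_append, Walk.length_cons, Walk.length_reverse, Nat.odd_iff]
    rw [Nat.even_iff] at heven hm_even
    omega
  obtain ⟨y, C, hC, hC_odd, hC_le⟩ := exists_odd_isCycle_of_alternating_walk hμ hmax _ hlen
    hp.2.1 hq.2.1 (hp.forallOddIndex_append_cons_reverse hq heven hm_even huv)
  have hC_girth := hgirth y C hC hC_odd
  have hC_three := hC.three_le_length
  rw [Walk.length_append, Walk.length_cons, Walk.length_reverse] at hC_le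
  rw [Nat.even_iff] at heven hm_even
  omega

theorem stmt11 (κ : ℕ) (hκ : 0 < κ) (G : SimpleGraph V) [DecidableRel G.Adj]
    (hgirth : ∀ (w : V) (c : G.Walk w w), c.IsCycle → Odd c.length → 2 * κ + 1 ≤ c.length)
    (b : V → ℕ) (hb : ∀ v : V, 0 < b v)
    (μ : Sym2 V → ℕ) (hμ : IsBMatching G b μ)
    (hmax : ∀ μ' : Sym2 V → ℕ, IsBMatching G b μ' →
      ∑ e ∈ G.edgeFinset, μ' e ≤ ∑ e ∈ G.edgeFinset, μ e)
    (u v : V) (huv : G.Adj u v)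
    (n : ℕ) (hu : altDist G b μ u = n) (heven : Even n) (hle : n ≤ κ - 1) :
    ∃ m : ℕ, altDist G b μ v = m ∧ Odd m :=
  stmt11_general κ G hgirth b μ hμ hmax u v huv n hu heven hle
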